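/- arXiv:1808.08460 — 10 statements merged into one kernel-verified Lean document; each statement's English description precedes it below -/
import Mathlib

section
/- Let c : X × X → ℝ≥0 be an outcome monotonic cost function with respect to an outcome likelihood ℓ : X → [0,1] (i.e., c(x,x') > 0 iff ℓ(x') > ℓ(x); c(x,x*) > c(x',x*) > 0 iff ℓ(x*) > ℓ(x') > ℓ(x); and c(x,x*) > c(x,x') > 0 iff ℓ(x*) > ℓ(x') > ℓ(x)). Then there exists a well-defined function c_L : ℓ(X) × ℓ(X) → ℝ≥0 such that c(x,x') = c_L(ℓ(x), ℓ(x')) for all x, x' ∈ X. -/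
/-- An outcome monotonic cost function factors through the outcome
likelihood: there is a well-defined likelihood cost `cL` with
`c x x' = cL (ℓ x) (ℓ x')`. -/
theorem stmt_0 {X : Type*} (ℓ : X → ℝ) (c : X → X → ℝ)
    (hrange : ∀ x, ℓ x ∈ Set.Icc (0:ℝ) 1)
    (hnn : ∀ x x', 0 ≤ c x x')
    (h1 : ∀ x x', 0 < c x x' ↔ ℓ x < ℓ x')
    (h2 : ∀ x x' xs, (c x' xs < c x xs ∧ 0 < c x' xs) ↔ (ℓ x < ℓ x' ∧ ℓ x' < ℓ xs))
    (h3 : ∀ x x' xs, (c x x' < c x xs ∧ 0 < c x x') ↔ (ℓ x < ℓ x' ∧ ℓ x' < ℓ xs)) :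
    ∃ cL : ℝ → ℝ → ℝ, ∀ x x', c x x' = cL (ℓ x) (ℓ x') := by
  classical
  have step1 : ∀ x₁ x₂ y, ℓ x₁ = ℓ x₂ → c x₁ y = c x₂ y := by
    intro x₁ x₂ y h
    rcases lt_or_ge (ℓ x₁) (ℓ y) with hl | hl
    · have p₁ : 0 < c x₁ y := (h1 x₁ y).mpr hl
      have p₂ : 0 < c x₂ y := (h1 x₂ y).mpr (h ▸ hl)
      by_contra hne
      rcases lt_or_gt_of_ne hne with hlt | hlt
      · exact absurd ((h2 x₂ x₁ y).mp ⟨hlt, p₁⟩).1 (by rw [h]; exact lt_irrefl _)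
      · exact absurd ((h2 x₁ x₂ y).mp ⟨hlt, p₂⟩).1 (by rw [h]; exact lt_irrefl _)
    · have z₁ : c x₁ y = 0 :=
        le_antisymm (by by_contra hc; exact absurd ((h1 x₁ y).mp (not_le.mp hc)) (not_lt.mpr hl)) (hnn _ _)
      have z₂ : c x₂ y = 0 :=
        le_antisymm (by by_contra hc; exact absurd ((h1 x₂ y).mp (not_le.mp hc)) (not_lt.mpr (h ▸ hl))) (hnn _ _)
      rw [z₁, z₂]
  have step2 : ∀ y x₁ x₂, ℓ x₁ = ℓ x₂ → c y x₁ = c y x₂ := by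
    intro y x₁ x₂ h
    rcases lt_or_ge (ℓ y) (ℓ x₁) with hl | hl
    · have p₁ : 0 < c y x₁ := (h1 y x₁).mpr hl
      have p₂ : 0 < c y x₂ := (h1 y x₂).mpr (h ▸ hl)
      by_contra hne
      rcases lt_or_gt_of_ne hne with hlt | hlt
      · exact absurd ((h3 y x₁ x₂).mp ⟨hlt, p₁⟩).2 (by rw [h]; exact lt_irrefl _)
      · exact absurd ((h3 y x₂ x₁).mp ⟨hlt, p₂⟩).2 (by rw [h]; exact lt_irrefl _)
    · have z₁ : c y x₁ = 0 :=
        le_antisymm (by by_contra hc; exact absurd ((h1 y x₁).mp (not_le.mp hc)) (not_lt.mpr hl)) (hnn _ _)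
      have z₂ : c y x₂ = 0 :=
        le_antisymm (by by_contra hc; exact absurd ((h1 y x₂).mp (not_le.mp hc)) (not_lt.mpr (h ▸ hl))) (hnn _ _)
      rw [z₁, z₂]
  refine ⟨fun a b => if h : (∃ x, ℓ x = a) ∧ (∃ x', ℓ x' = b) then c h.1.choose h.2.choose else 0, ?_⟩
  intro x x'
  have h : (∃ y, ℓ y = ℓ x) ∧ (∃ y', ℓ y' = ℓ x') := ⟨⟨x, rfl⟩, ⟨x', rfl⟩⟩
  simp only [dif_pos h]
  rw [step1 x h.1.choose x' h.1.choose_spec.symm, step2 _ x' h.2.choose h.2.choose_spec.symm]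
end

section
/- If the institution's strategic utility at threshold τ strictly exceeds the strategic utility at the non-strategic optimal threshold τ₀ = 0.5, then the social burden at τ strictly exceeds the social burden at τ₀. -/
/-- If the institution's strategic utility at threshold `τ` strictly exceeds
the strategic utility at the non-strategic optimal threshold `τ₀ = 0.5`, then
the social burden at `τ` strictly exceeds the social burden at `τ₀`.
Hypotheses: `B` is monotonically non-decreasing, `U` is non-decreasing up to
its maximizer `τ* ≥ 1/2`, and differing utilities force differing burdens. -/
theorem stmt_6 (U B : ℝ → ℝ) (τstar : ℝ) (hstar : (1:ℝ)/2 ≤ τstar)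
    (hq : ∀ a b : ℝ, a ≤ b → b ≤ τstar → U a ≤ U b)
    (hmax : ∀ τ : ℝ, U τ ≤ U τstar)
    (hB : Monotone B)
    (hne : ∀ a b : ℝ, U a ≠ U b → B a ≠ B b)
    (τ : ℝ) (h : U ((1:ℝ)/2) < U τ) :
    B ((1:ℝ)/2) < B τ := by
  have hlt : (1:ℝ)/2 ≤ τ := by
    by_contra hle
    push_neg at hle
    exact absurd (hq τ ((1:ℝ)/2) hle.le hstar) (not_le.mpr h)
  exact lt_of_le_of_ne (hB hlt) (hne _ _ (ne_of_lt h))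
end

section
/- Let F_a, F_b : [0,1] → [0,1] be CDFs with F_b(l) > F_a(l) for all l ∈ (0,1) (group b disadvantaged in features), and let c_L : [0,1] × [0,1] → ℝ≥0 be a differentiable likelihood cost with ∂c_L(l,τ)/∂l < 0 for l ∈ (0,τ) and c_L(τ,τ) = 0. Define the group social burden B_g(τ) = ∫₀^τ c_L(l,τ) dF_g(l). Then via integration by parts, B_g(τ) = −∫₀^τ (∂c_L(l,τ)/∂l) F_g(l) dl, and the social gap Gap(τ) = B_b(τ) − B_a(τ) = ∫₀^τ (∂c_L(l,τ)/∂l)(F_a(l) − F_b(l)) dl is strictly positive for τ ∈ (0,1]. -/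
/-!
Since `c` is continuous with nonpositive derivative, that derivative is integrable and
`c l = ∫_l^τ (-c')` (FTC, using `c τ = 0`). Tonelli then turns `∫ c dF` over `(0, τ]` into
`∫_0^τ (-c' s) · F((0, s)) ds`, and `F((0, s)) = F(s⁻) - F 0` equals `F s - F 0` off the countably
many jumps of `F`. The gap is positive because its integrand `c' · (F_a - F_b)` is a product
of two negative factors on `(0, τ)`.
-/

open MeasureTheory Set

section DerivNonpos

variable {c : ℝ → ℝ} {a b : ℝ}

lemma integrableOn_deriv_of_deriv_nonpos (hc : ContinuousOn c (Icc a b))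
    (hdiff : DifferentiableOn ℝ c (Ioo a b)) (hc' : ∀ x ∈ Ioo a b, deriv c x ≤ 0) :
    IntegrableOn (deriv c) (Ioc a b) := by
  simpa using (intervalIntegral.integrableOn_deriv_of_nonneg hc.neg
    (fun x hx => ((hdiff x hx).differentiableAt (isOpen_Ioo.mem_nhds hx)).hasDerivAt.neg)
    (fun x hx => neg_nonneg.2 (hc' x hx))).neg

lemma eq_setIntegral_neg_deriv_of_deriv_nonpos (hc : ContinuousOn c (Icc a b))
    (hdiff : DifferentiableOn ℝ c (Ioo a b)) (hc' : ∀ x ∈ Ioo a b, deriv c x ≤ 0)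
    (hcb : c b = 0) {x : ℝ} (hx : x ∈ Icc a b) :
    c x = ∫ y in Ioo x b, -deriv c y := by
  have hIcc : Icc x b ⊆ Icc a b := Icc_subset_Icc_left hx.1
  have hIoo : Ioo x b ⊆ Ioo a b := Ioo_subset_Ioo_left hx.1
  have hint : IntervalIntegrable (deriv c) volume x b :=
    (intervalIntegrable_iff_integrableOn_Ioc_of_le hx.2).2 <|
      integrableOn_deriv_of_deriv_nonpos (hc.mono hIcc) (hdiff.mono hIoo) fun y hy =>
        hc' y (hIoo hy)
  rw [integral_neg, ← integral_Ioc_eq_integral_Ioo, ← intervalIntegral.integral_of_le hx.2,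
    intervalIntegral.integral_eq_sub_of_hasDerivAt_of_le hx.2 (hc.mono hIcc)
      (fun y hy => ((hdiff y (hIoo hy)).differentiableAt
        (isOpen_Ioo.mem_nhds (hIoo hy))).hasDerivAt) hint, hcb]
  ring

lemma nonneg_of_deriv_nonpos (hc : ContinuousOn c (Icc a b))
    (hdiff : DifferentiableOn ℝ c (Ioo a b)) (hc' : ∀ x ∈ Ioo a b, deriv c x ≤ 0)
    (hcb : c b = 0) {x : ℝ} (hx : x ∈ Icc a b) : 0 ≤ c x := by
  rw [eq_setIntegral_neg_deriv_of_deriv_nonpos hc hdiff hc' hcb hx]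
  exact setIntegral_nonneg measurableSet_Ioo fun y hy =>
    neg_nonneg.2 (hc' y (Ioo_subset_Ioo_left hx.1 hy))

lemma StieltjesFunction.integrableOn_deriv_mul_sub (F : StieltjesFunction ℝ)
    (hc : ContinuousOn c (Icc a b))
    (hdiff : DifferentiableOn ℝ c (Ioo a b)) (hc' : ∀ x ∈ Ioo a b, deriv c x ≤ 0) :
    IntegrableOn (fun x => deriv c x * (F x - F a)) (Ioc a b) :=
  (integrableOn_deriv_of_deriv_nonpos hc hdiff hc').mul_bdd
    (F.mono.measurable.sub_const _).aestronglyMeasurable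
    (ae_restrict_of_forall_mem measurableSet_Ioc fun x hx => by
      rw [Real.norm_of_nonneg (sub_nonneg.2 (F.mono hx.1.le))]
      exact sub_le_sub_right (F.mono hx.2) _)

end DerivNonpos

lemma StieltjesFunction.ae_leftLim_eq (F : StieltjesFunction ℝ) :
    ∀ᵐ y, Function.leftLim F y = F y := by
  rw [ae_iff]
  simpa using F.countable_leftLim_ne.measure_zero volume

lemma StieltjesFunction.lintegral_Ioc_lintegral_Ioo (F : StieltjesFunction ℝ) {g : ℝ → ENNReal}
    (hg : Measurable g) (a b : ℝ) :
    ∫⁻ x in Ioc a b, (∫⁻ y in Ioo x b, g y) ∂F.measure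
      = ∫⁻ y in Ioo a b, ENNReal.ofReal (F y - F a) * g y := by
  have hinner : EqOn (fun x => ∫⁻ y in Ioo x b, g y)
      (fun x => ∫⁻ y in Ioo a b, (Ioi x).indicator g y) (Ioc a b) := by
    intro x hx
    have : Ioi x ∩ Ioo a b = Ioo x b := by
      ext z; simp only [mem_inter_iff, mem_Ioi, mem_Ioo]; grind
    simp only [setLIntegral_indicator isOpen_Ioi.measurableSet, this]
  have hswap : Measurable (Function.uncurry fun x y => (Ioi x).indicator g y) := by
    have : (Function.uncurry fun x y => (Ioi x).indicator g y)
        = {p : ℝ × ℝ | p.1 < p.2}.indicator (g ∘ Prod.snd) := by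
      ext p; simp [Function.uncurry, indicator_apply]
    rw [this]
    exact (hg.comp measurable_snd).indicator (measurableSet_lt measurable_fst measurable_snd)
  have houter : EqOn (fun y => ∫⁻ x in Ioc a b, (Ioi x).indicator g y ∂F.measure)
      (fun y => ENNReal.ofReal (Function.leftLim F y - F a) * g y) (Ioo a b) := by
    intro y hy
    have hind : (fun x => (Ioi x).indicator g y) = (Iio y).indicator fun _ => g y := by
      ext x; simp [indicator_apply]
    have : Iio y ∩ Ioc a b = Ioo a y := by
      ext z; simp only [mem_inter_iff, mem_Iio, mem_Ioc, mem_Ioo]; grind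
    simp only [hind, setLIntegral_indicator measurableSet_Iio, setLIntegral_const, this,
      F.measure_Ioo, mul_comm]
  calc ∫⁻ x in Ioc a b, (∫⁻ y in Ioo x b, g y) ∂F.measure
      = ∫⁻ x in Ioc a b, (∫⁻ y in Ioo a b, (Ioi x).indicator g y) ∂F.measure :=
        setLIntegral_congr_fun measurableSet_Ioc hinner
    _ = ∫⁻ y in Ioo a b, ∫⁻ x in Ioc a b, (Ioi x).indicator g y ∂F.measure :=
        lintegral_lintegral_swap hswap.aemeasurable
    _ = ∫⁻ y in Ioo a b, ENNReal.ofReal (Function.leftLim F y - F a) * g y :=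
        setLIntegral_congr_fun measurableSet_Ioo houter
    _ = ∫⁻ y in Ioo a b, ENNReal.ofReal (F y - F a) * g y :=
        setLIntegral_congr_fun_ae measurableSet_Ioo <|
          F.ae_leftLim_eq.mono fun y hy _ => by rw [hy]

theorem StieltjesFunction.setIntegral_Ioc_eq_neg_setIntegral_deriv_mul (F : StieltjesFunction ℝ)
    {c : ℝ → ℝ} {a b : ℝ} (hc : ContinuousOn c (Icc a b))
    (hdiff : DifferentiableOn ℝ c (Ioo a b)) (hc' : ∀ x ∈ Ioo a b, deriv c x ≤ 0)
    (hcb : c b = 0) :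
    ∫ x in Ioc a b, c x ∂F.measure = -∫ x in Ioc a b, deriv c x * (F x - F a) := by
  have hlayer : EqOn (fun x => ENNReal.ofReal (c x))
      (fun x => ∫⁻ y in Ioo x b, ENNReal.ofReal (-deriv c y)) (Ioc a b) := by
    intro x hx
    have hIoo : Ioo x b ⊆ Ioo a b := Ioo_subset_Ioo_left hx.1.le
    dsimp only
    rw [eq_setIntegral_neg_deriv_of_deriv_nonpos hc hdiff hc' hcb (Ioc_subset_Icc_self hx),
      ofReal_integral_eq_lintegral_ofReal]
    · exact ((integrableOn_deriv_of_deriv_nonpos hc hdiff hc').mono_set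
        (Ioo_subset_Ioc_self.trans (Ioc_subset_Ioc_left hx.1.le))).neg
    · exact ae_restrict_of_forall_mem measurableSet_Ioo fun y hy => neg_nonneg.2 (hc' y (hIoo hy))
  have hprod_nonneg : ∀ y ∈ Ioo a b, 0 ≤ -(deriv c y * (F y - F a)) := fun y hy =>
    neg_nonneg.2 (mul_nonpos_of_nonpos_of_nonneg (hc' y hy) (sub_nonneg.2 (F.mono hy.1.le)))
  calc ∫ x in Ioc a b, c x ∂F.measure
      = (∫⁻ x in Ioc a b, ENNReal.ofReal (c x) ∂F.measure).toReal :=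
        integral_eq_lintegral_of_nonneg_ae
          (ae_restrict_of_forall_mem measurableSet_Ioc fun x hx =>
            nonneg_of_deriv_nonpos hc hdiff hc' hcb (Ioc_subset_Icc_self hx))
          ((hc.mono Ioc_subset_Icc_self).aestronglyMeasurable measurableSet_Ioc)
    _ = (∫⁻ y in Ioo a b, ENNReal.ofReal (F y - F a) * ENNReal.ofReal (-deriv c y)).toReal := by
        rw [setLIntegral_congr_fun measurableSet_Ioc hlayer,
          F.lintegral_Ioc_lintegral_Ioo (g := fun y => ENNReal.ofReal (-deriv c y))
            (measurable_deriv c).neg.ennreal_ofReal]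
    _ = (∫⁻ y in Ioo a b, ENNReal.ofReal (-(deriv c y * (F y - F a)))).toReal := by
        congr 1
        refine setLIntegral_congr_fun measurableSet_Ioo fun y hy => ?_
        rw [← ENNReal.ofReal_mul (sub_nonneg.2 (F.mono hy.1.le))]
        ring_nf
    _ = ∫ y in Ioo a b, -(deriv c y * (F y - F a)) := by
        rw [← ofReal_integral_eq_lintegral_ofReal, ENNReal.toReal_ofReal
          (setIntegral_nonneg measurableSet_Ioo hprod_nonneg)]
        · exact ((F.integrableOn_deriv_mul_sub hc hdiff hc').mono_set Ioo_subset_Ioc_self).neg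
        · exact ae_restrict_of_forall_mem measurableSet_Ioo hprod_nonneg
    _ = -∫ x in Ioc a b, deriv c x * (F x - F a) := by
        rw [integral_neg, integral_Ioc_eq_integral_Ioo]

theorem stmt_7_general (Fa Fb : StieltjesFunction ℝ) (cL dcL : ℝ → ℝ → ℝ) (τ : ℝ)
    (hτ : τ ∈ Set.Ioc (0:ℝ) 1)
    (hFa0 : Fa 0 = 0) (hFb0 : Fb 0 = 0)
    (hdom : ∀ l ∈ Set.Ioo (0:ℝ) 1, Fa l < Fb l)
    (hderiv : ∀ t l : ℝ, HasDerivAt (fun s => cL s t) (dcL l t) l)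
    (hneg : ∀ t l : ℝ, 0 < l → l < t → dcL l t < 0)
    (hzero : ∀ t : ℝ, cL t t = 0) :
    (∫ l in Set.Ioc (0:ℝ) τ, cL l τ ∂Fa.measure
        = -∫ l in (0:ℝ)..τ, dcL l τ * Fa l) ∧
    (∫ l in Set.Ioc (0:ℝ) τ, cL l τ ∂Fb.measure
        = -∫ l in (0:ℝ)..τ, dcL l τ * Fb l) ∧
    0 < ∫ l in (0:ℝ)..τ, dcL l τ * (Fa l - Fb l) := by
  obtain ⟨hτ0, hτ1⟩ := hτ
  set c : ℝ → ℝ := fun s => cL s τ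
  have hdc : deriv c = fun l => dcL l τ := funext fun l => (hderiv τ l).deriv
  have hc : ContinuousOn c (Icc 0 τ) := fun l _ => (hderiv τ l).continuousAt.continuousWithinAt
  have hdiff : DifferentiableOn ℝ c (Ioo 0 τ) := fun l _ =>
    (hderiv τ l).differentiableAt.differentiableWithinAt
  have hc' : ∀ l ∈ Ioo 0 τ, deriv c l ≤ 0 := fun l hl => hdc ▸ (hneg τ l hl.1 hl.2).le
  have hburden : ∀ F : StieltjesFunction ℝ, F 0 = 0 →
      ∫ l in Ioc 0 τ, cL l τ ∂F.measure = -∫ l in (0:ℝ)..τ, dcL l τ * F l ∧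
      IntervalIntegrable (fun l => dcL l τ * F l) volume 0 τ := by
    intro F hF0
    have hint := F.integrableOn_deriv_mul_sub hc hdiff hc'
    simp only [hF0, sub_zero, hdc] at hint
    refine ⟨?_, (intervalIntegrable_iff_integrableOn_Ioc_of_le hτ0.le).2 hint⟩
    rw [F.setIntegral_Ioc_eq_neg_setIntegral_deriv_mul hc hdiff hc' (hzero τ), hF0, hdc,
      intervalIntegral.integral_of_le hτ0.le]
    simp only [sub_zero]
  obtain ⟨hBa, hinta⟩ := hburden Fa hFa0
  obtain ⟨hBb, hintb⟩ := hburden Fb hFb0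
  refine ⟨hBa, hBb, intervalIntegral.intervalIntegral_pos_of_pos_on ?_ (fun l hl => ?_) hτ0⟩
  · simpa only [mul_sub] using hinta.sub hintb
  · exact mul_pos_of_neg_of_neg (hneg τ l hl.1 hl.2)
      (sub_neg.2 (hdom l ⟨hl.1, hl.2.trans_le hτ1⟩))

/-- If group `b` is disadvantaged in features (strict first-order stochastic
dominance `F_b > F_a` on `(0,1)`) and the likelihood cost `c_L` is
differentiable in its first argument with `∂c_L/∂l < 0` on `(0,τ)` and
`c_L(τ,τ) = 0`, then by integration by parts the group social burden satisfies
`B_g(τ) = −∫₀^τ (∂c_L(l,τ)/∂l) F_g(l) dl`, and the social gap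
`Gap(τ) = ∫₀^τ (∂c_L(l,τ)/∂l)(F_a(l) − F_b(l)) dl` is strictly positive for
`τ ∈ (0,1]`. -/
theorem stmt_7 (Fa Fb : StieltjesFunction ℝ) (cL dcL : ℝ → ℝ → ℝ) (τ : ℝ)
    (hτ : τ ∈ Set.Ioc (0:ℝ) 1)
    (hFa0 : Fa 0 = 0) (hFb0 : Fb 0 = 0)
    (hFann : ∀ l : ℝ, 0 ≤ Fa l) (hFbnn : ∀ l : ℝ, 0 ≤ Fb l)
    (hFa1 : ∀ l : ℝ, Fa l ≤ 1) (hFb1 : ∀ l : ℝ, Fb l ≤ 1)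
    (hdom : ∀ l ∈ Set.Ioo (0:ℝ) 1, Fa l < Fb l)
    (hderiv : ∀ t l : ℝ, HasDerivAt (fun s => cL s t) (dcL l t) l)
    (hneg : ∀ t l : ℝ, 0 < l → l < t → dcL l t < 0)
    (hzero : ∀ t : ℝ, cL t t = 0)
    (hinta : IntervalIntegrable (fun l => dcL l τ * Fa l) volume 0 τ)
    (hintb : IntervalIntegrable (fun l => dcL l τ * Fb l) volume 0 τ) :
    (∫ l in Set.Ioc (0:ℝ) τ, cL l τ ∂Fa.measure
        = -∫ l in (0:ℝ)..τ, dcL l τ * Fa l) ∧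
    (∫ l in Set.Ioc (0:ℝ) τ, cL l τ ∂Fb.measure
        = -∫ l in (0:ℝ)..τ, dcL l τ * Fb l) ∧
    0 < ∫ l in (0:ℝ)..τ, dcL l τ * (Fa l - Fb l) :=
  stmt_7_general Fa Fb cL dcL τ hτ hFa0 hFb0 hdom hderiv hneg hzero
end

section
/- Under the assumptions of the previous statement, and additionally assuming ∂c_L(l,τ)/∂l is monotonically non-increasing in τ (the likelihood condition), the social gap Gap(τ) = ∫₀^τ (∂c_L(l,τ)/∂l)(F_a(l) − F_b(l)) dl is strictly increasing in τ: for 0 ≤ τ < τ' ≤ 1, Gap(τ') > Gap(τ). -/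
open MeasureTheory

/-- Under first-order stochastic dominance (`F_b > F_a` on `(0,1)`), negativity
of `∂c_L/∂l` on `(0,τ)`, and the likelihood condition that `∂c_L(l,τ)/∂l` is
non-increasing in `τ`, the social gap
`Gap(τ) = ∫₀^τ (∂c_L(l,τ)/∂l)(F_a(l) − F_b(l)) dl` is strictly increasing:
for `0 ≤ τ < τ' ≤ 1`, `Gap(τ) < Gap(τ')`. -/
theorem stmt_8 (Fa Fb : ℝ → ℝ) (cL dcL : ℝ → ℝ → ℝ)
    (hFa : Monotone Fa) (hFb : Monotone Fb)
    (hFa0 : Fa 0 = 0) (hFb0 : Fb 0 = 0)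
    (hdom : ∀ l ∈ Set.Ioo (0:ℝ) 1, Fa l < Fb l)
    (hderiv : ∀ t l : ℝ, HasDerivAt (fun s => cL s t) (dcL l t) l)
    (hneg : ∀ t l : ℝ, 0 < l → l < t → dcL l t < 0)
    (hzero : ∀ t : ℝ, cL t t = 0)
    (hanti : ∀ l : ℝ, Antitone fun t => dcL l t)
    (hint : ∀ t ∈ Set.Icc (0:ℝ) 1,
      IntervalIntegrable (fun l => dcL l t * (Fa l - Fb l)) volume 0 t)
    (τ τ' : ℝ) (h0 : 0 ≤ τ) (h1 : τ < τ') (h2 : τ' ≤ 1) :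
    (∫ l in (0:ℝ)..τ, dcL l τ * (Fa l - Fb l)) <
      ∫ l in (0:ℝ)..τ', dcL l τ' * (Fa l - Fb l) := by
  have hτ1 : τ < 1 := lt_of_lt_of_le h1 h2
  have h0' : (0:ℝ) ≤ τ' := h0.trans h1.le
  have I1 : IntervalIntegrable (fun l => dcL l τ * (Fa l - Fb l)) volume 0 τ :=
    hint τ ⟨h0, hτ1.le⟩
  have I2 : IntervalIntegrable (fun l => dcL l τ' * (Fa l - Fb l)) volume 0 τ' :=
    hint τ' ⟨h0', h2⟩
  have hsub1 : Set.uIcc (0:ℝ) τ ⊆ Set.uIcc (0:ℝ) τ' := by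
    rw [Set.uIcc_of_le h0, Set.uIcc_of_le h0']
    exact Set.Icc_subset_Icc le_rfl h1.le
  have hsub2 : Set.uIcc τ τ' ⊆ Set.uIcc (0:ℝ) τ' := by
    rw [Set.uIcc_of_le h1.le, Set.uIcc_of_le h0']
    exact Set.Icc_subset_Icc h0 le_rfl
  have I2a := I2.mono_set hsub1
  have I2b := I2.mono_set hsub2
  have hsplit : (∫ l in (0:ℝ)..τ', dcL l τ' * (Fa l - Fb l))
      = (∫ l in (0:ℝ)..τ, dcL l τ' * (Fa l - Fb l))
        + ∫ l in τ..τ', dcL l τ' * (Fa l - Fb l) :=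
    (intervalIntegral.integral_add_adjacent_intervals I2a I2b).symm
  have hnn : 0 ≤ (∫ l in (0:ℝ)..τ, dcL l τ' * (Fa l - Fb l))
      - ∫ l in (0:ℝ)..τ, dcL l τ * (Fa l - Fb l) := by
    rw [← intervalIntegral.integral_sub I2a I1]
    apply intervalIntegral.integral_nonneg h0
    intro u hu
    have hFab : Fa u - Fb u ≤ 0 := by
      rcases eq_or_lt_of_le hu.1 with h | h
      · simp [← h, hFa0, hFb0]
      · exact sub_nonpos.2 (hdom u ⟨h, lt_of_le_of_lt hu.2 hτ1⟩).le
    have hd : dcL u τ' - dcL u τ ≤ 0 := sub_nonpos.2 (hanti u h1.le)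
    have := mul_nonneg (neg_nonneg.2 hd) (neg_nonneg.2 hFab)
    nlinarith [this]
  have hpos : 0 < ∫ l in τ..τ', dcL l τ' * (Fa l - Fb l) := by
    apply intervalIntegral.intervalIntegral_pos_of_pos_on I2b _ h1
    intro x hx
    have hx0 : 0 < x := lt_of_le_of_lt h0 hx.1
    exact mul_pos_of_neg_of_neg (hneg τ' x hx0 hx.2)
      (sub_neg.2 (hdom x ⟨hx0, lt_of_lt_of_le hx.2 h2⟩))
  linarith
end

section
/- In the same game, any Nash equilibrium threshold τ for the institution satisfies τ₀ ≤ τ ≤ τ*, where τ₀ = 0.5 is the non-strategic optimal threshold and τ* = max{τ : c_L(0.5, τ) ≤ 1} is the Stackelberg threshold. -/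
open MeasureTheory

/-- Any Nash equilibrium threshold `τ` for the institution lies between the
non-strategic optimal threshold `τ₀ = 0.5` and the Stackelberg threshold
`τ* = max {t ≤ 1 : c_L(0.5, t) ≤ 1}`.  The Nash conditions are: (i) likelihoods
above `τ` are at least `0.5`; (ii) likelihoods below `τ` that cannot afford to
game are below `0.5`; (iii) conditioned on gaming, the probability of a
positive label is at least `0.5`. -/
theorem stmt_13 {Ω : Type*} [MeasurableSpace Ω] (P : Measure Ω)
    [IsProbabilityMeasure P]
    (L : Ω → ℝ) (Yv : Ω → Bool) (hLmeas : Measurable L)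
    (hrange : ∀ ω, L ω ∈ Set.Icc (0:ℝ) 1)
    (hsupp : ∀ a b : ℝ, a < b → (Set.Ioo a b ∩ Set.Icc (0:ℝ) 1).Nonempty →
      0 < P (L ⁻¹' Set.Ioo a b))
    (cL : ℝ → ℝ → ℝ) (hcont : Continuous fun p : ℝ × ℝ => cL p.1 p.2)
    (hnn : ∀ l t : ℝ, 0 ≤ cL l t)
    (hanti : ∀ t : ℝ, Antitone fun l => cL l t)
    (hmono : ∀ l : ℝ, Monotone fun t => cL l t)
    (hzero : ∀ l t : ℝ, t ≤ l → cL l t = 0)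
    (hcond : ∀ S : Set ℝ, MeasurableSet S →
      (P ({ω | Yv ω = true} ∩ L ⁻¹' S)).toReal = ∫ ω in L ⁻¹' S, L ω ∂P)
    (τstar : ℝ) (hstar : IsGreatest {t : ℝ | t ≤ 1 ∧ cL (1/2) t ≤ 1} τstar)
    (τ : ℝ) (hτ : τ ∈ Set.Icc (0:ℝ) 1)
    (hNash1 : ∀ l ∈ Set.Icc (0:ℝ) 1, τ < l → 1/2 ≤ l)
    (hNash2 : ∀ l ∈ Set.Icc (0:ℝ) 1, l < τ → 1 < cL l τ → l < 1/2)
    (hNash3 : (1/2) * (P {ω | cL (L ω) τ ≤ 1 ∧ L ω ≤ τ}).toReal ≤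
      (P ({ω | Yv ω = true} ∩ {ω | cL (L ω) τ ≤ 1 ∧ L ω ≤ τ})).toReal) :
    1/2 ≤ τ ∧ τ ≤ τstar := by
  constructor
  · by_contra h
    push_neg at h
    have hl : (τ + 1/2)/2 ∈ Set.Icc (0:ℝ) 1 := by
      constructor <;> [linarith [hτ.1]; linarith [hτ.2]]
    have := hNash1 _ hl (by linarith)
    linarith
  · by_cases hhalf : τ ≤ 1/2
    · have hmem : (1/2 : ℝ) ∈ {t : ℝ | t ≤ 1 ∧ cL (1/2) t ≤ 1} :=
        ⟨by norm_num, by rw [hzero _ _ le_rfl]; norm_num⟩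
      exact le_trans hhalf (hstar.2 hmem)
    · push_neg at hhalf
      by_cases hc : cL (1/2) τ ≤ 1
      · exact hstar.2 ⟨hτ.2, hc⟩
      · push_neg at hc
        have := hNash2 (1/2) (by norm_num) hhalf hc
        linarith
end

section
/- If τ_N ∈ [0.5, τ*] is a Nash equilibrium threshold, then every τ ∈ [τ_N, τ*] is also a Nash equilibrium threshold; hence the set of Nash thresholds is an interval [τ_N, τ*]. -/
open MeasureTheory

/-!
Write `S τ = {l | c_L(l, τ) ≤ 1, l ≤ τ}` for the gaming interval at threshold `τ`. Conditions
(i) and (ii) follow from `τ ≥ τ_N ≥ 1/2` and from `c_L(1/2, τ) ≤ c_L(1/2, τ*) ≤ 1`. For (iii),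
since `ℓ(X) = P(Y = 1 | X)`, the precision condition at `τ` says `∫_{ℓ ∈ S τ} (ℓ - 1/2) ≥ 0`.
Raising the threshold from `τ_N` to `τ` only removes likelihoods below `1/2` from the gaming
interval and only adds likelihoods above `τ_N ≥ 1/2`, so this integral can only grow.
-/

section SetIntegral

variable {Ω : Type*} [MeasurableSpace Ω] {μ : Measure Ω} {f : Ω → ℝ} {A B : Set Ω}

theorem setIntegral_le_setIntegral_of_nonpos_sdiff_of_nonneg_sdiff (hf : Integrable f μ)
    (hA : MeasurableSet A) (hB : MeasurableSet B)
    (hAB : ∀ ω ∈ A \ B, f ω ≤ 0) (hBA : ∀ ω ∈ B \ A, 0 ≤ f ω) :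
    ∫ ω in A, f ω ∂μ ≤ ∫ ω in B, f ω ∂μ := by
  rw [← integral_inter_add_sdiff (s := A) hB hf.integrableOn,
    ← integral_inter_add_sdiff (s := B) hA hf.integrableOn, Set.inter_comm B A]
  gcongr _ + ?_
  exact (setIntegral_nonpos (hA.diff hB) hAB).trans (setIntegral_nonneg (hB.diff hA) hBA)

theorem mul_measure_le_measure_inter_iff_setIntegral_sub_nonneg [IsFiniteMeasure μ]
    (hf : Integrable f μ) (hcond : (μ (B ∩ A)).toReal = ∫ ω in A, f ω ∂μ) (a : ℝ) :
    a * (μ A).toReal ≤ (μ (B ∩ A)).toReal ↔ 0 ≤ ∫ ω in A, (f ω - a) ∂μ := by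
  rw [integral_sub hf.integrableOn (integrableOn_const (measure_ne_top μ A)),
    setIntegral_const, hcond, smul_eq_mul, measureReal_def]
  constructor <;> intro h <;> linarith

end SetIntegral

def gamingSet (c : ℝ → ℝ → ℝ) (τ : ℝ) : Set ℝ := {l | c l τ ≤ 1 ∧ l ≤ τ}

section GamingSet

variable {c : ℝ → ℝ → ℝ} {τ₀ τ l : ℝ}

theorem measurableSet_gamingSet (hc : Antitone fun l => c l τ) :
    MeasurableSet (gamingSet c τ) :=
  (measurableSet_le hc.measurable measurable_const).inter measurableSet_Iic

theorem lt_of_mem_gamingSet_sdiff_of_le (hc : Antitone fun l => c l τ) {a : ℝ} (ha : c a τ ≤ 1)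
    (hτ : τ₀ ≤ τ) (hl : l ∈ gamingSet c τ₀ \ gamingSet c τ) : l < a := by
  obtain ⟨⟨-, hlτ₀⟩, hlτ⟩ := hl
  have hcost : 1 < c l τ := by
    by_contra! hcost
    exact hlτ ⟨hcost, hlτ₀.trans hτ⟩
  exact hc.reflect_lt (ha.trans_lt hcost)

theorem lt_of_mem_gamingSet_sdiff_of_ge (hc : Monotone fun t => c l t) (hτ : τ₀ ≤ τ)
    (hl : l ∈ gamingSet c τ \ gamingSet c τ₀) : τ₀ < l := by
  obtain ⟨⟨hcost, -⟩, hlτ₀⟩ := hl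
  by_contra! hle
  exact hlτ₀ ⟨(hc hτ).trans hcost, hle⟩

end GamingSet

theorem stmt_14_general {Ω : Type*} [MeasurableSpace Ω] (P : Measure Ω)
    [IsProbabilityMeasure P]
    (L : Ω → ℝ) (Yv : Ω → Bool) (hLmeas : Measurable L)
    (hrange : ∀ ω, L ω ∈ Set.Icc (0:ℝ) 1)
    (cL : ℝ → ℝ → ℝ)
    (hanti : ∀ t : ℝ, Antitone fun l => cL l t)
    (hmono : ∀ l : ℝ, Monotone fun t => cL l t)
    (hcond : ∀ S : Set ℝ, MeasurableSet S →
      (P ({ω | Yv ω = true} ∩ L ⁻¹' S)).toReal = ∫ ω in L ⁻¹' S, L ω ∂P)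
    (τstar : ℝ) (hstar : IsGreatest {t : ℝ | t ≤ 1 ∧ cL (1/2) t ≤ 1} τstar)
    (τN : ℝ) (hτN : 1/2 ≤ τN)
    (hNash3 : (1/2) * (P {ω | cL (L ω) τN ≤ 1 ∧ L ω ≤ τN}).toReal ≤
      (P ({ω | Yv ω = true} ∩ {ω | cL (L ω) τN ≤ 1 ∧ L ω ≤ τN})).toReal)
    (τ : ℝ) (hτl : τN ≤ τ) (hτu : τ ≤ τstar) :
    (∀ l ∈ Set.Icc (0:ℝ) 1, τ < l → 1/2 ≤ l) ∧
    (∀ l ∈ Set.Icc (0:ℝ) 1, l < τ → 1 < cL l τ → l < 1/2) ∧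
    (1/2) * (P {ω | cL (L ω) τ ≤ 1 ∧ L ω ≤ τ}).toReal ≤
      (P ({ω | Yv ω = true} ∩ {ω | cL (L ω) τ ≤ 1 ∧ L ω ≤ τ})).toReal := by
  have hhalf : cL (1/2) τ ≤ 1 := (hmono (1/2) hτu).trans hstar.1.2
  refine ⟨fun l _ hl => by linarith, fun l _ _ hl => (hanti τ).reflect_lt (hhalf.trans_lt hl), ?_⟩
  have hLint : Integrable L P :=
    Integrable.of_bound hLmeas.aestronglyMeasurable 1 (Filter.Eventually.of_forall fun ω => by
      rw [Real.norm_eq_abs, abs_le]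
      exact ⟨by linarith [(hrange ω).1], (hrange ω).2⟩)
  have hmeas : ∀ t, MeasurableSet (L ⁻¹' gamingSet cL t) := fun t =>
    hLmeas (measurableSet_gamingSet (hanti t))
  have hprecision : ∀ t, (1/2) * (P (L ⁻¹' gamingSet cL t)).toReal ≤
      (P ({ω | Yv ω = true} ∩ L ⁻¹' gamingSet cL t)).toReal ↔
      0 ≤ ∫ ω in L ⁻¹' gamingSet cL t, (L ω - 1/2) ∂P := fun t =>
    mul_measure_le_measure_inter_iff_setIntegral_sub_nonneg hLint
      (hcond _ (measurableSet_gamingSet (hanti t))) _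
  refine (hprecision τ).2 <| ((hprecision τN).1 hNash3).trans <|
    setIntegral_le_setIntegral_of_nonpos_sdiff_of_nonneg_sdiff (hLint.sub (integrable_const _))
      (hmeas τN) (hmeas τ) (fun ω hω => ?_) (fun ω hω => ?_)
  · linarith [lt_of_mem_gamingSet_sdiff_of_le (hanti τ) hhalf hτl hω]
  · linarith [lt_of_mem_gamingSet_sdiff_of_ge (hmono (L ω)) hτl hω]

/-- If `τ_N ∈ [0.5, τ*]` is a Nash equilibrium threshold, then every
`τ ∈ [τ_N, τ*]` is also a Nash equilibrium threshold (so the Nash thresholds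
form the interval `[τ_N, τ*]`). -/
theorem stmt_14 {Ω : Type*} [MeasurableSpace Ω] (P : Measure Ω)
    [IsProbabilityMeasure P]
    (L : Ω → ℝ) (Yv : Ω → Bool) (hLmeas : Measurable L)
    (hrange : ∀ ω, L ω ∈ Set.Icc (0:ℝ) 1)
    (hsupp : ∀ a b : ℝ, a < b → (Set.Ioo a b ∩ Set.Icc (0:ℝ) 1).Nonempty →
      0 < P (L ⁻¹' Set.Ioo a b))
    (cL : ℝ → ℝ → ℝ) (hcont : Continuous fun p : ℝ × ℝ => cL p.1 p.2)
    (hnn : ∀ l t : ℝ, 0 ≤ cL l t)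
    (hanti : ∀ t : ℝ, Antitone fun l => cL l t)
    (hmono : ∀ l : ℝ, Monotone fun t => cL l t)
    (hzero : ∀ l t : ℝ, t ≤ l → cL l t = 0)
    (hcond : ∀ S : Set ℝ, MeasurableSet S →
      (P ({ω | Yv ω = true} ∩ L ⁻¹' S)).toReal = ∫ ω in L ⁻¹' S, L ω ∂P)
    (τstar : ℝ) (hstar : IsGreatest {t : ℝ | t ≤ 1 ∧ cL (1/2) t ≤ 1} τstar)
    (τN : ℝ) (hτN : 1/2 ≤ τN) (hτNstar : τN ≤ τstar)
    (hNash1 : ∀ l ∈ Set.Icc (0:ℝ) 1, τN < l → 1/2 ≤ l)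
    (hNash2 : ∀ l ∈ Set.Icc (0:ℝ) 1, l < τN → 1 < cL l τN → l < 1/2)
    (hNash3 : (1/2) * (P {ω | cL (L ω) τN ≤ 1 ∧ L ω ≤ τN}).toReal ≤
      (P ({ω | Yv ω = true} ∩ {ω | cL (L ω) τN ≤ 1 ∧ L ω ≤ τN})).toReal)
    (τ : ℝ) (hτl : τN ≤ τ) (hτu : τ ≤ τstar) :
    (∀ l ∈ Set.Icc (0:ℝ) 1, τ < l → 1/2 ≤ l) ∧
    (∀ l ∈ Set.Icc (0:ℝ) 1, l < τ → 1 < cL l τ → l < 1/2) ∧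
    (1/2) * (P {ω | cL (L ω) τ ≤ 1 ∧ L ω ≤ τ}).toReal ≤
      (P ({ω | Yv ω = true} ∩ {ω | cL (L ω) τ ≤ 1 ∧ L ω ≤ τ})).toReal :=
  stmt_14_general P L Yv hLmeas hrange cL hanti hmono hcond τstar hstar τN hτN hNash3 τ hτl hτu
end

section
/- Conditional probability of a positive label on likelihood intervals is monotone under rightward interval shifts: if ℓ(X) = P(Y=1 | X) and [l₁, u₁], [l₂, u₂] are intervals with l₁ ≤ l₂ and u₁ ≤ u₂ (both of positive probability), then P(Y=1 | ℓ(X) ∈ [l₂, u₂]) ≥ P(Y=1 | ℓ(X) ∈ [l₁, u₁]). -/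
/-! By `hcond`, each ratio is the average of `L` over `A = L⁻¹' [l₁, u₁]`, resp.
`B = L⁻¹' [l₂, u₂]`. Go from `A` to `B` through `A ∪ B`: the points of `B \ A` carry values
above `u₁`, hence above every value on `A`, so adding them raises the average; the points of
`A \ B` carry values below `l₂`, hence below every value on `B`, so removing them raises it
again. -/

open MeasureTheory Set
open scoped ENNReal

section SetAverage

variable {α : Type*} [MeasurableSpace α] {μ : Measure α} {f : α → ℝ} {s t : Set α} {c : ℝ}

theorem setAverage_le_setAverage_union (hst : AEDisjoint μ s t) (ht : NullMeasurableSet t μ)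
    (hs₀ : μ s ≠ 0) (hsμ : μ s ≠ ∞) (htμ : μ t ≠ ∞)
    (hfs : IntegrableOn f s μ) (hft : IntegrableOn f t μ)
    (hfs_le : ∀ x ∈ s, f x ≤ c) (hft_ge : ∀ x ∈ t, c ≤ f x) :
    ⨍ x in s, f x ∂μ ≤ ⨍ x in s ∪ t, f x ∂μ := by
  by_cases ht₀ : μ t = 0
  · rw [setAverage_congr (union_ae_eq_left_of_ae_eq_empty (ae_eq_empty.2 ht₀))]
  have hs_le : ⨍ x in s, f x ∂μ ≤ c := by
    obtain ⟨x, hx, hle⟩ := exists_setAverage_le hs₀ hsμ hfs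
    exact hle.trans (hfs_le x hx)
  have ht_ge : c ≤ ⨍ x in t, f x ∂μ := by
    obtain ⟨x, hx, hle⟩ := exists_le_setAverage ht₀ htμ hft
    exact (hft_ge x hx).trans hle
  have hmem := average_union_mem_segment hst ht hsμ htμ hfs hft
  rw [segment_eq_Icc (hs_le.trans ht_ge)] at hmem
  exact hmem.1

theorem setAverage_union_le_setAverage (hst : AEDisjoint μ s t) (ht : NullMeasurableSet t μ)
    (hs₀ : μ s ≠ 0) (hsμ : μ s ≠ ∞) (htμ : μ t ≠ ∞)
    (hfs : IntegrableOn f s μ) (hft : IntegrableOn f t μ)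
    (hfs_ge : ∀ x ∈ s, c ≤ f x) (hft_le : ∀ x ∈ t, f x ≤ c) :
    ⨍ x in s ∪ t, f x ∂μ ≤ ⨍ x in s, f x ∂μ := by
  have := setAverage_le_setAverage_union (f := -f) (c := -c) hst ht hs₀ hsμ htμ hfs.neg hft.neg
    (fun x hx ↦ neg_le_neg (hfs_ge x hx)) (fun x hx ↦ neg_le_neg (hft_le x hx))
  simpa only [Pi.neg_apply, average_neg, neg_le_neg_iff] using this

end SetAverage

theorem integrableOn_preimage_Icc {α : Type*} [MeasurableSpace α] {μ : Measure α}
    [IsFiniteMeasure μ] {f : α → ℝ} (hf : Measurable f) (a b : ℝ) :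
    IntegrableOn f (f ⁻¹' Icc a b) μ :=
  .of_bound (measure_lt_top μ _) hf.aestronglyMeasurable.restrict (max |a| |b|)
    (ae_restrict_of_forall_mem (hf measurableSet_Icc) fun _ hx ↦ abs_le_max_abs_abs hx.1 hx.2)

theorem stmt_15_general {Ω : Type*} [MeasurableSpace Ω] (P : Measure Ω)
    [IsProbabilityMeasure P]
    (L : Ω → ℝ) (Yv : Ω → Bool) (hLmeas : Measurable L)
    (hcond : ∀ S : Set ℝ, MeasurableSet S →
      (P ({ω | Yv ω = true} ∩ L ⁻¹' S)).toReal = ∫ ω in L ⁻¹' S, L ω ∂P)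
    (l₁ u₁ l₂ u₂ : ℝ) (hl : l₁ ≤ l₂) (hu : u₁ ≤ u₂)
    (hp1 : 0 < P (L ⁻¹' Set.Icc l₁ u₁)) (hp2 : 0 < P (L ⁻¹' Set.Icc l₂ u₂)) :
    (P ({ω | Yv ω = true} ∩ L ⁻¹' Set.Icc l₁ u₁)).toReal
        / (P (L ⁻¹' Set.Icc l₁ u₁)).toReal ≤
      (P ({ω | Yv ω = true} ∩ L ⁻¹' Set.Icc l₂ u₂)).toReal
        / (P (L ⁻¹' Set.Icc l₂ u₂)).toReal := by
  have h_average (a b : ℝ) : (P ({ω | Yv ω = true} ∩ L ⁻¹' Icc a b)).toReal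
      / (P (L ⁻¹' Icc a b)).toReal = ⨍ ω in L ⁻¹' Icc a b, L ω ∂P := by
    rw [hcond _ measurableSet_Icc, setAverage_eq, smul_eq_mul, measureReal_def, div_eq_inv_mul]
  rw [h_average, h_average]
  set A := L ⁻¹' Icc l₁ u₁
  set B := L ⁻¹' Icc l₂ u₂
  have hA : MeasurableSet A := hLmeas measurableSet_Icc
  have hB : MeasurableSet B := hLmeas measurableSet_Icc
  calc ⨍ ω in A, L ω ∂P ≤ ⨍ ω in A ∪ (B \ A), L ω ∂P :=
        setAverage_le_setAverage_union (c := u₁) disjoint_sdiff_right.aedisjoint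
          (hB.diff hA).nullMeasurableSet hp1.ne' (measure_ne_top _ _) (measure_ne_top _ _)
          (integrableOn_preimage_Icc hLmeas _ _)
          ((integrableOn_preimage_Icc hLmeas _ _).mono_set sdiff_subset)
          (fun _ hω ↦ hω.2) (fun _ hω ↦ le_of_not_ge fun h ↦ hω.2 ⟨hl.trans hω.1.1, h⟩)
    _ = ⨍ ω in B ∪ (A \ B), L ω ∂P := by rw [union_sdiff_self, union_sdiff_self, union_comm]
    _ ≤ ⨍ ω in B, L ω ∂P :=
        setAverage_union_le_setAverage (c := l₂) disjoint_sdiff_right.aedisjoint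
          (hA.diff hB).nullMeasurableSet hp2.ne' (measure_ne_top _ _) (measure_ne_top _ _)
          (integrableOn_preimage_Icc hLmeas _ _)
          ((integrableOn_preimage_Icc hLmeas _ _).mono_set sdiff_subset)
          (fun _ hω ↦ hω.1) (fun _ hω ↦ le_of_not_ge fun h ↦ hω.2 ⟨h, hω.1.2.trans hu⟩)

/-- The conditional probability of a positive label on likelihood intervals is
monotone under rightward interval shifts: if `L = ℓ(X) = P(Y = 1 | X)`
(encoded by `hcond`), `l₁ ≤ l₂`, `u₁ ≤ u₂` and both events have positive
probability, then
`P(Y = 1 | L ∈ [l₂, u₂]) ≥ P(Y = 1 | L ∈ [l₁, u₁])`. -/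
theorem stmt_15 {Ω : Type*} [MeasurableSpace Ω] (P : Measure Ω)
    [IsProbabilityMeasure P]
    (L : Ω → ℝ) (Yv : Ω → Bool) (hLmeas : Measurable L)
    (hrange : ∀ ω, L ω ∈ Set.Icc (0:ℝ) 1)
    (hcond : ∀ S : Set ℝ, MeasurableSet S →
      (P ({ω | Yv ω = true} ∩ L ⁻¹' S)).toReal = ∫ ω in L ⁻¹' S, L ω ∂P)
    (l₁ u₁ l₂ u₂ : ℝ) (hl : l₁ ≤ l₂) (hu : u₁ ≤ u₂)
    (hp1 : 0 < P (L ⁻¹' Set.Icc l₁ u₁)) (hp2 : 0 < P (L ⁻¹' Set.Icc l₂ u₂)) :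
    (P ({ω | Yv ω = true} ∩ L ⁻¹' Set.Icc l₁ u₁)).toReal
        / (P (L ⁻¹' Set.Icc l₁ u₁)).toReal ≤
      (P ({ω | Yv ω = true} ∩ L ⁻¹' Set.Icc l₂ u₂)).toReal
        / (P (L ⁻¹' Set.Icc l₂ u₂)).toReal :=
  stmt_15_general P L Yv hLmeas hcond l₁ u₁ l₂ u₂ hl hu hp1 hp2
end

section
/- For any classifier f : X → {0,1}, the strategic acceptance region equals {x : ∃ x' with f(x') = 1 and c(x,x') ≤ 1}, and if c is outcome monotonic with τ(f) = min{ℓ(x) : f(x) = 1}, then this region equals {x : ∃ x' with ℓ(x') = τ(f) and c(x,x') ≤ 1}, which is the strategic acceptance region of the outcome threshold classifier f'(x) = 1[ℓ(x) ≥ τ(f)]. Consequently f and f' have equal strategic utility. -/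
open MeasureTheory

/-- For any classifier `f`, the strategic acceptance region
`{x : ∃ x', f x' = 1 ∧ c(x,x') ≤ 1}` equals, under outcome monotonicity of the
cost, `{x : ∃ x', ℓ x' = τ(f) ∧ c(x,x') ≤ 1}` where `τ(f)` is the minimum
likelihood of an accepted point; this in turn equals the strategic acceptance
region of the outcome threshold classifier `f' = 1[ℓ(x) ≥ τ(f)]`, so `f` and
`f'` have equal strategic utility. -/
theorem stmt_16 {X Ω : Type*} [MeasurableSpace Ω] (P : Measure Ω)
    [IsProbabilityMeasure P] (Xv : Ω → X) (Yv : Ω → Bool)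
    (ℓ : X → ℝ) (c : X → X → ℝ)
    (hrange : ∀ x, ℓ x ∈ Set.Ioc (0:ℝ) 1)
    (hnn : ∀ x x', 0 ≤ c x x')
    (h1 : ∀ x x', 0 < c x x' ↔ ℓ x < ℓ x')
    (h2 : ∀ x x' xs, (c x' xs < c x xs ∧ 0 < c x' xs) ↔ (ℓ x < ℓ x' ∧ ℓ x' < ℓ xs))
    (h3 : ∀ x x' xs, (c x x' < c x xs ∧ 0 < c x x') ↔ (ℓ x < ℓ x' ∧ ℓ x' < ℓ xs))
    (f : X → Bool) (τf : ℝ) (hτf : IsLeast (ℓ '' {z | f z = true}) τf) :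
    ({x | ∃ x', f x' = true ∧ c x x' ≤ 1}
        = {x | ∃ x', ℓ x' = τf ∧ c x x' ≤ 1}) ∧
    ({x | ∃ x', ℓ x' = τf ∧ c x x' ≤ 1}
        = {x | ∃ x', τf ≤ ℓ x' ∧ c x x' ≤ 1}) ∧
    P {ω | Xv ω ∈ {x | ∃ x', f x' = true ∧ c x x' ≤ 1} ↔ Yv ω = true}
      = P {ω | Xv ω ∈ {x | ∃ x', τf ≤ ℓ x' ∧ c x x' ≤ 1} ↔ Yv ω = true} := by
  -- monotonicity of cost in target likelihood
  have mono : ∀ x a b, ℓ b ≤ ℓ a → c x b ≤ c x a := by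
    intro x a b hle
    by_contra h
    push_neg at h
    rcases lt_or_eq_of_le (hnn x a) with hpos | hz
    · have := (h3 x a b).mp ⟨h, hpos⟩
      exact absurd hle (not_le.mpr this.2)
    · have hax : ¬ ℓ x < ℓ a := by
        intro hl; exact absurd ((h1 x a).mpr hl) (by rw [← hz]; exact lt_irrefl 0)
      have hb : 0 < c x b := lt_of_le_of_lt (hnn x a) h
      have := (h1 x b).mp hb
      exact hax (lt_of_lt_of_le this (hle.trans (le_refl _)))
  obtain ⟨⟨z, hz, hℓz⟩, hlb⟩ := hτf
  have e1 : ({x | ∃ x', f x' = true ∧ c x x' ≤ 1} : Set X)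
      = {x | ∃ x', ℓ x' = τf ∧ c x x' ≤ 1} := by
    ext x
    constructor
    · rintro ⟨x', hfx', hc⟩
      refine ⟨z, hℓz, ?_⟩
      have : τf ≤ ℓ x' := hlb ⟨x', hfx', rfl⟩
      exact le_trans (mono x x' z (by rw [hℓz]; exact this)) hc
    · rintro ⟨x', hx', hc⟩
      exact ⟨z, hz, le_trans (mono x x' z (by rw [hℓz, hx'])) hc⟩
  have e2 : ({x | ∃ x', ℓ x' = τf ∧ c x x' ≤ 1} : Set X)
      = {x | ∃ x', τf ≤ ℓ x' ∧ c x x' ≤ 1} := by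
    ext x
    constructor
    · rintro ⟨x', hx', hc⟩; exact ⟨x', le_of_eq hx'.symm, hc⟩
    · rintro ⟨x', hx', hc⟩
      exact ⟨z, hℓz, le_trans (mono x x' z (by rw [hℓz]; exact hx')) hc⟩
  exact ⟨e1, e2, by rw [e1, e2]⟩
end

section
/- Under outcome monotonicity, the individual burden induced by a classifier f equals the individual burden induced by the associated outcome threshold classifier: min{c(x,x') : f(x') = 1} = min{c(x,x') : ℓ(x') ≥ τ(f)} where τ(f) = min{ℓ(z) : f(z)=1}; hence the social burden of f equals that of its threshold counterpart. -/
open MeasureTheory ENNReal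

/-!
Every accepted point is above the threshold `τ(f)`, so the threshold classifier can only be
cheaper. Conversely, any target `x'` above the threshold has an accepted twin `z` of the same
likelihood, and outcome monotonicity makes moving to `z` no more expensive than moving to `x'`.
-/

theorem cost_le_of_likelihood_eq {X : Type*} {ℓ : X → ℝ} {c : X → X → ℝ≥0∞}
    (h1 : ∀ x x', 0 < c x x' ↔ ℓ x < ℓ x')
    (h3 : ∀ x x' xs, (c x x' < c x xs ∧ 0 < c x x') ↔ (ℓ x < ℓ x' ∧ ℓ x' < ℓ xs))
    {x x' z : X} (hz : ℓ z = ℓ x') : c x z ≤ c x x' := by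
  by_contra! hlt
  have hpos : 0 < c x x' := (h1 x x').2 (hz ▸ (h1 x z).1 (pos_of_gt hlt))
  exact (h3 x x' z).1 ⟨hlt, hpos⟩ |>.2.ne' hz

theorem stmt_17_general {X : Type*} [MeasurableSpace X] (μ : Measure X)
    (ℓ : X → ℝ) (c : X → X → ℝ≥0∞)
    (h1 : ∀ x x', 0 < c x x' ↔ ℓ x < ℓ x')
    (h3 : ∀ x x' xs, (c x x' < c x xs ∧ 0 < c x x') ↔ (ℓ x < ℓ x' ∧ ℓ x' < ℓ xs))
    (f : X → Bool) (τf : ℝ) (hτf : IsLeast (ℓ '' {z | f z = true}) τf)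
    (hattain : ∀ l : ℝ, l ∈ Set.range ℓ → τf ≤ l → ∃ z, f z = true ∧ ℓ z = l) :
    (∀ x : X, (⨅ x' ∈ {z | f z = true}, c x x')
        = ⨅ x' ∈ {z | τf ≤ ℓ z}, c x x') ∧
    ∫⁻ x, (⨅ x' ∈ {z | f z = true}, c x x') ∂μ
        = ∫⁻ x, (⨅ x' ∈ {z | τf ≤ ℓ z}, c x x') ∂μ := by
  have burden_eq : ∀ x : X, (⨅ x' ∈ {z | f z = true}, c x x')
      = ⨅ x' ∈ {z | τf ≤ ℓ z}, c x x' := fun x =>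
    le_antisymm
      (iInf₂_mono' fun x' hx' =>
        let ⟨z, hfz, hz⟩ := hattain (ℓ x') ⟨x', rfl⟩ hx'
        ⟨z, hfz, cost_le_of_likelihood_eq h1 h3 hz⟩)
      (biInf_mono fun z hz => hτf.2 ⟨z, hz, rfl⟩)
  exact ⟨burden_eq, lintegral_congr burden_eq⟩

/-- Under outcome monotonicity, the individual burden induced by a classifier
`f` equals the individual burden induced by its associated outcome threshold
classifier: `inf {c(x,x') : f x' = 1} = inf {c(x,x') : ℓ x' ≥ τ(f)}`, where
`τ(f)` is the minimum likelihood over the acceptance set of `f`; hence,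
integrating against the distribution `μ` of `X` given `Y = 1`, the social
burdens agree. -/
theorem stmt_17 {X : Type*} [MeasurableSpace X] (μ : Measure X)
    (ℓ : X → ℝ) (c : X → X → ℝ≥0∞)
    (hrange : ∀ x, ℓ x ∈ Set.Ioc (0:ℝ) 1)
    (h1 : ∀ x x', 0 < c x x' ↔ ℓ x < ℓ x')
    (h2 : ∀ x x' xs, (c x' xs < c x xs ∧ 0 < c x' xs) ↔ (ℓ x < ℓ x' ∧ ℓ x' < ℓ xs))
    (h3 : ∀ x x' xs, (c x x' < c x xs ∧ 0 < c x x') ↔ (ℓ x < ℓ x' ∧ ℓ x' < ℓ xs))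
    (f : X → Bool) (τf : ℝ) (hτf : IsLeast (ℓ '' {z | f z = true}) τf)
    (hattain : ∀ l : ℝ, l ∈ Set.range ℓ → τf ≤ l → ∃ z, f z = true ∧ ℓ z = l) :
    (∀ x : X, (⨅ x' ∈ {z | f z = true}, c x x')
        = ⨅ x' ∈ {z | τf ≤ ℓ z}, c x x') ∧
    ∫⁻ x, (⨅ x' ∈ {z | f z = true}, c x x') ∂μ
        = ∫⁻ x, (⨅ x' ∈ {z | τf ≤ ℓ z}, c x x') ∂μ :=
  stmt_17_general μ ℓ c h1 h3 f τf hτf hattain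
end

section
/- If group b is disadvantaged in features relative to group a (strict first-order stochastic dominance of likelihood CDFs: F_b(l) > F_a(l) on (0,1)) and the likelihood condition holds (∂c_L(l,τ)/∂l non-increasing in τ), then whenever the institution's strategic utility at threshold τ strictly exceeds that at the non-strategic threshold τ₀ = 0.5, the social gap satisfies Gap(τ) > Gap(τ₀). -/
open MeasureTheory

/-- If group `b` is disadvantaged in features (`F_b > F_a` on `(0,1)`) and the
likelihood condition holds (`∂c_L(l,τ)/∂l` non-increasing in `τ`), then
whenever the institution's strategic utility at threshold `τ ≤ 1` strictly
exceeds that at the non-strategic threshold `τ₀ = 0.5`, the social gap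
`Gap(t) = ∫₀^t (∂c_L(l,t)/∂l)(F_a(l) − F_b(l)) dl` satisfies
`Gap(τ) > Gap(τ₀)`.  Here `U` is non-decreasing up to its maximizer
`τ* ≥ 1/2` (quasiconcavity on the Pareto interval). -/
theorem stmt_18 (Fa Fb : ℝ → ℝ) (cL dcL : ℝ → ℝ → ℝ)
    (hFa : Monotone Fa) (hFb : Monotone Fb)
    (hFa0 : Fa 0 = 0) (hFb0 : Fb 0 = 0)
    (hdom : ∀ l ∈ Set.Ioo (0:ℝ) 1, Fa l < Fb l)
    (hderiv : ∀ t l : ℝ, HasDerivAt (fun s => cL s t) (dcL l t) l)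
    (hneg : ∀ t l : ℝ, 0 < l → l < t → dcL l t < 0)
    (hzero : ∀ t : ℝ, cL t t = 0)
    (hanti : ∀ l : ℝ, Antitone fun t => dcL l t)
    (hint : ∀ t ∈ Set.Icc (0:ℝ) 1,
      IntervalIntegrable (fun l => dcL l t * (Fa l - Fb l)) volume 0 t)
    (U : ℝ → ℝ) (τstar : ℝ) (hstar : (1:ℝ)/2 ≤ τstar)
    (hq : ∀ a b : ℝ, a ≤ b → b ≤ τstar → U a ≤ U b)
    (hmax : ∀ t : ℝ, U t ≤ U τstar)
    (τ : ℝ) (hτ1 : τ ≤ 1) (hU : U ((1:ℝ)/2) < U τ) :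
    (∫ l in (0:ℝ)..((1:ℝ)/2), dcL l ((1:ℝ)/2) * (Fa l - Fb l)) <
      ∫ l in (0:ℝ)..τ, dcL l τ * (Fa l - Fb l) := by

  -- First, τ > 1/2
  have hτ : (1:ℝ)/2 < τ := by
    by_contra h
    push_neg at h
    exact absurd (hq τ ((1:ℝ)/2) h hstar) (not_le.mpr hU)
  -- integrability pieces
  have hintτ := hint τ ⟨by linarith, hτ1⟩
  have hI2 : IntervalIntegrable (fun l => dcL l τ * (Fa l - Fb l)) volume 0 ((1:ℝ)/2) :=
    hintτ.mono_set (by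
      rw [Set.uIcc_of_le (by norm_num : (0:ℝ) ≤ 1/2), Set.uIcc_of_le (by linarith : (0:ℝ) ≤ τ)]
      exact Set.Icc_subset_Icc le_rfl (by linarith))
  have hI3 : IntervalIntegrable (fun l => dcL l τ * (Fa l - Fb l)) volume ((1:ℝ)/2) τ :=
    hintτ.mono_set (by
      rw [Set.uIcc_of_le (by linarith : (1:ℝ)/2 ≤ τ), Set.uIcc_of_le (by linarith : (0:ℝ) ≤ τ)]
      exact Set.Icc_subset_Icc (by norm_num) le_rfl)
  have hintH := hint ((1:ℝ)/2) ⟨by norm_num, by norm_num⟩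
  -- split the integral
  have hsplit : (∫ l in (0:ℝ)..τ, dcL l τ * (Fa l - Fb l)) =
      (∫ l in (0:ℝ)..((1:ℝ)/2), dcL l τ * (Fa l - Fb l)) +
      ∫ l in ((1:ℝ)/2)..τ, dcL l τ * (Fa l - Fb l) :=
    (intervalIntegral.integral_add_adjacent_intervals hI2 hI3).symm
  -- middle piece is strictly positive
  have hpos : 0 < ∫ l in ((1:ℝ)/2)..τ, dcL l τ * (Fa l - Fb l) := by
    apply intervalIntegral.intervalIntegral_pos_of_pos_on hI3
    · intro x hx
      have hx0 : 0 < x := by have := hx.1; linarith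
      have hx1 : x < 1 := lt_of_lt_of_le hx.2 hτ1
      have h1 : dcL x τ < 0 := hneg τ x hx0 hx.2
      have h2 : Fa x - Fb x < 0 := sub_neg.mpr (hdom x ⟨hx0, hx1⟩)
      exact mul_pos_of_neg_of_neg h1 h2
    · exact hτ
  -- first piece: pointwise comparison
  have hmono : (∫ l in (0:ℝ)..((1:ℝ)/2), dcL l ((1:ℝ)/2) * (Fa l - Fb l)) ≤
      ∫ l in (0:ℝ)..((1:ℝ)/2), dcL l τ * (Fa l - Fb l) := by
    apply intervalIntegral.integral_mono_on (by norm_num) hintH hI2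
    intro x hx
    have hc : Fa x - Fb x ≤ 0 := by
      rcases eq_or_lt_of_le hx.1 with h0 | h0
      · rw [← h0, hFa0, hFb0]; norm_num
      · exact le_of_lt (sub_neg.mpr (hdom x ⟨h0, by linarith [hx.2]⟩))
    have hd : dcL x τ ≤ dcL x ((1:ℝ)/2) := hanti x (le_of_lt hτ)
    exact mul_le_mul_of_nonpos_right hd hc
  rw [hsplit]
  linarith
end
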